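/- Accretivity bound for the Carleson trace: Let A : (0,∞) × ℝⁿ → ℂ^{d×d} be bounded measurable and suppose there is κ > 0 such that Re ∫_{ℝⁿ} ⟨A(t,x) f(x), f(x)⟩ dx ≥ κ ‖f‖²₂ for a.e. t > 0 and all f in a fixed closed subspace H of L²(ℝⁿ; ℂ^d) containing C₀^∞ ∩ H densely. If A₀ is t-independent with ‖A − A₀‖_c < ∞, then Re ∫_{ℝⁿ} ⟨A₀(x) f(x), f(x)⟩ dx ≥ κ ‖f‖²₂ for all f ∈ H. -/

import Mathlib

set_option maxHeartbeats 1000000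


open MeasureTheory Set ENNReal

/-- The axis-parallel cube with corner `z` and side length `ℓ`. -/
def cube (n : ℕ) (z : EuclideanSpace ℝ (Fin n)) (ℓ : ℝ) :
    Set (EuclideanSpace ℝ (Fin n)) :=
  {y | ∀ i, y i ∈ Icc (z i) (z i + ℓ)}

/-- The square of the standard Carleson norm
`‖G‖_c² = sup_Q |Q|⁻¹ ∬_{(0,ℓ(Q))×Q} |G(t,x)|² dt dx/t` for matrix-valued `G`. -/
noncomputable def stdCarlesonSq (n d : ℕ)
    (G : ℝ → EuclideanSpace ℝ (Fin n) → Fin d → Fin d → ℂ) : ℝ≥0∞ :=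
  ⨆ (z : EuclideanSpace ℝ (Fin n)) (ℓ : ℝ) (_ : 0 < ℓ),
    (ENNReal.ofReal (ℓ ^ n))⁻¹ *
      ∫⁻ t in Ioo (0:ℝ) ℓ,
        (∫⁻ x in cube n z ℓ, (‖G t x‖₊ : ℝ≥0∞) ^ 2) * (ENNReal.ofReal t)⁻¹

section Aux

/-- The sesquilinear form associated to a matrix. -/
noncomputable def QF (d : ℕ) (a : Fin d → Fin d → ℂ) (v w : Fin d → ℂ) : ℂ :=
  ∑ i, (starRingEnd ℂ) (v i) * ∑ j, a i j * w j

lemma QF_eq_double (d : ℕ) (a : Fin d → Fin d → ℂ) (v w : Fin d → ℂ) :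
    QF d a v w = ∑ i, ∑ j, (starRingEnd ℂ) (v i) * (a i j * w j) := by
  simp [QF, Finset.mul_sum]

lemma QF_add_left (d : ℕ) (a b : Fin d → Fin d → ℂ) (v w : Fin d → ℂ) :
    QF d (fun i j => a i j + b i j) v w = QF d a v w + QF d b v w := by
  simp only [QF_eq_double, ← Finset.sum_add_distrib]
  refine Finset.sum_congr rfl fun i _ => Finset.sum_congr rfl fun j _ => by ring

lemma QF_split (d : ℕ) (a : Fin d → Fin d → ℂ) (f g : Fin d → ℂ) :
    QF d a f f - QF d a g g =
      QF d a (f - g) f + QF d a g (f - g) := by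
  simp only [QF_eq_double, ← Finset.sum_add_distrib, ← Finset.sum_sub_distrib]
  refine Finset.sum_congr rfl fun i _ => Finset.sum_congr rfl fun j _ => by
    simp only [Pi.sub_apply, map_sub]; ring

lemma norm_QF_le (d : ℕ) (a : Fin d → Fin d → ℂ) (v w : Fin d → ℂ) :
    ‖QF d a v w‖ ≤ ‖a‖ * ((∑ i, ‖v i‖) * (∑ j, ‖w j‖)) := by
  calc ‖QF d a v w‖ ≤ ∑ i, ‖(starRingEnd ℂ) (v i) * ∑ j, a i j * w j‖ :=
        norm_sum_le _ _
    _ ≤ ∑ i, ‖v i‖ * (‖a‖ * ∑ j, ‖w j‖) := by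
        refine Finset.sum_le_sum fun i _ => ?_
        rw [norm_mul, RCLike.norm_conj]
        refine mul_le_mul_of_nonneg_left ?_ (norm_nonneg _)
        calc ‖∑ j, a i j * w j‖ ≤ ∑ j, ‖a i j * w j‖ := norm_sum_le _ _
          _ ≤ ∑ j, ‖a‖ * ‖w j‖ := by
              refine Finset.sum_le_sum fun j _ => ?_
              rw [norm_mul]
              exact mul_le_mul_of_nonneg_right
                ((norm_le_pi_norm (a i) j).trans (norm_le_pi_norm a i)) (norm_nonneg _)
          _ = ‖a‖ * ∑ j, ‖w j‖ := by rw [Finset.mul_sum]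
    _ = ‖a‖ * ((∑ i, ‖v i‖) * (∑ j, ‖w j‖)) := by rw [← Finset.sum_mul]; ring

lemma sum_norm_sq_bound (d : ℕ) (v : Fin d → ℂ) :
    (∑ i, ‖v i‖) * (∑ j, ‖v j‖) ≤ (d : ℝ) * ∑ i, ‖v i‖ ^ 2 := by
  have := sq_sum_le_card_mul_sum_sq (s := (Finset.univ : Finset (Fin d)))
    (f := fun i => ‖v i‖)
  simpa [sq] using this

/-- Cauchy–Schwarz for integrals, via the Hilbert space `L²(ℝ)`. -/
lemma integral_norm_mul_norm_le {α : Type*} [MeasurableSpace α] {μ : Measure α}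
    {E F : Type*} [NormedAddCommGroup E] [NormedAddCommGroup F]
    {u : α → E} {v : α → F} (hu : MemLp u 2 μ) (hv : MemLp v 2 μ) :
    ∫ x, ‖u x‖ * ‖v x‖ ∂μ ≤ (eLpNorm u 2 μ).toReal * (eLpNorm v 2 μ).toReal := by
  have hU : MemLp (fun x => ‖u x‖) 2 μ := hu.norm
  have hV : MemLp (fun x => ‖v x‖) 2 μ := hv.norm
  set U : Lp ℝ 2 μ := hU.toLp _
  set V : Lp ℝ 2 μ := hV.toLp _
  have h1 : ∫ x, ‖u x‖ * ‖v x‖ ∂μ = (inner ℝ U V) := by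
    rw [L2.inner_def]
    refine (integral_congr_ae ?_).symm
    filter_upwards [hU.coeFn_toLp, hV.coeFn_toLp] with x hx hy
    simp [U, V, hx, hy, mul_comm]
  rw [h1]
  calc (inner ℝ U V) ≤ ‖U‖ * ‖V‖ := real_inner_le_norm U V
    _ = (eLpNorm u 2 μ).toReal * (eLpNorm v 2 μ).toReal := by
        rw [Lp.norm_toLp, Lp.norm_toLp, eLpNorm_norm, eLpNorm_norm]

lemma integrable_norm_mul_norm {α : Type*} [MeasurableSpace α] {μ : Measure α}
    {E F : Type*} [NormedAddCommGroup E] [NormedAddCommGroup F]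
    {u : α → E} {v : α → F} (hu : MemLp u 2 μ) (hv : MemLp v 2 μ) :
    Integrable (fun x => ‖u x‖ * ‖v x‖) μ := by
  refine Integrable.mono' (((hu.norm.integrable_sq).add (hv.norm.integrable_sq)).div_const 2)
    (hu.1.norm.mul hv.1.norm) (Filter.Eventually.of_forall fun x => ?_)
  simp only [Pi.add_apply]
  rw [Real.norm_eq_abs, abs_of_nonneg (by positivity)]
  nlinarith [two_mul_le_add_sq ‖u x‖ ‖v x‖, norm_nonneg (u x), norm_nonneg (v x)]

lemma lintegral_inv_Ioo_top {δ : ℝ} (hδ : 0 < δ) :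
    ∫⁻ t in Ioo (0:ℝ) δ, (ENNReal.ofReal t)⁻¹ = ⊤ := by
  by_contra h
  have hpos : ∀ᵐ t ∂(volume.restrict (Ioo (0:ℝ) δ)), (0:ℝ) ≤ t⁻¹ := by
    filter_upwards [ae_restrict_mem measurableSet_Ioo] with t ht
    exact (inv_pos.2 ht.1).le
  have hint : IntegrableOn (fun t : ℝ => t⁻¹) (Ioo 0 δ) := by
    constructor
    · exact measurable_inv.aestronglyMeasurable
    · rw [hasFiniteIntegral_iff_ofReal hpos]
      have heq : ∀ t ∈ Ioo (0:ℝ) δ, ENNReal.ofReal t⁻¹ = (ENNReal.ofReal t)⁻¹ := fun t ht =>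
        ENNReal.ofReal_inv_of_pos ht.1
      rw [setLIntegral_congr_fun measurableSet_Ioo heq]
      exact lt_top_iff_ne_top.2 h
  have hint2 : IntervalIntegrable (fun t : ℝ => t⁻¹) volume 0 δ := by
    rw [intervalIntegrable_iff_integrableOn_Ioc_of_le hδ.le]
    exact hint.congr_set_ae Ioo_ae_eq_Ioc.symm
  rw [intervalIntegrable_inv_iff] at hint2
  rcases hint2 with h1 | h2
  · exact hδ.ne' h1.symm
  · exact h2 (by simp [Set.uIcc_of_le hδ.le, hδ.le])

lemma cube_measurable {n : ℕ} (z : EuclideanSpace ℝ (Fin n)) (ℓ : ℝ) :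
    MeasurableSet (cube n z ℓ) := by
  have : cube n z ℓ = ⋂ i, (fun y : EuclideanSpace ℝ (Fin n) => y i) ⁻¹' Icc (z i) (z i + ℓ) := by
    ext y; simp [cube]
  rw [this]
  exact MeasurableSet.iInter fun i =>
    (EuclideanSpace.proj i : EuclideanSpace ℝ (Fin n) →L[ℝ] ℝ).continuous.measurable measurableSet_Icc

lemma cube_compact {n : ℕ} (z : EuclideanSpace ℝ (Fin n)) (ℓ : ℝ) :
    IsCompact (cube n z ℓ) := by
  have h : cube n z ℓ =
      (EuclideanSpace.equiv (Fin n) ℝ).toHomeomorph ⁻¹'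
        (Set.univ.pi fun i => Icc (z i) (z i + ℓ)) := by
    ext y
    constructor
    · intro hy i _; exact hy i
    · intro hy i; exact hy i (Set.mem_univ i)
  rw [h, (EuclideanSpace.equiv (Fin n) ℝ).toHomeomorph.isCompact_preimage]
  exact isCompact_univ_pi fun i => isCompact_Icc

lemma cube_volume_lt_top {n : ℕ} (z : EuclideanSpace ℝ (Fin n)) (ℓ : ℝ) :
    volume (cube n z ℓ) < ⊤ :=
  (cube_compact z ℓ).measure_lt_top

lemma abs_coord_le_norm {n : ℕ} (y : EuclideanSpace ℝ (Fin n)) (i : Fin n) :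
    |y i| ≤ ‖y‖ := by
  rw [EuclideanSpace.norm_eq, ← Real.sqrt_sq_eq_abs]
  apply Real.sqrt_le_sqrt
  have : (y i) ^ 2 = ‖y i‖ ^ 2 := by rw [Real.norm_eq_abs, sq_abs]
  rw [this]
  exact Finset.single_le_sum (f := fun j => ‖y j‖ ^ 2) (fun j _ => sq_nonneg _) (Finset.mem_univ i)

lemma mem_cube_nat {n : ℕ} (x : EuclideanSpace ℝ (Fin n)) :
    ∃ j : ℕ, x ∈ cube n (WithLp.toLp 2 fun _ => -(j:ℝ)) (2*j+1) := by
  obtain ⟨j, hj⟩ := exists_nat_ge ‖x‖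
  refine ⟨j, fun i => ?_⟩
  have h3 : |x i| ≤ (j:ℝ) := (abs_coord_le_norm x i).trans hj
  have h4 := abs_le.1 h3
  constructor
  · simpa using h4.1
  · simp only [PiLp.toLp_apply]
    linarith [h4.2]

variable {α : Type*} [MeasurableSpace α] {μ : Measure α} {d : ℕ}

lemma memLp_comp {u : α → Fin d → ℂ} (hu : MemLp u 2 μ) (i : Fin d) :
    MemLp (fun x => u x i) 2 μ :=
  hu.of_le ((continuous_apply i).comp_aestronglyMeasurable hu.1)
    (Filter.Eventually.of_forall fun x => norm_le_pi_norm (u x) i)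

lemma integrable_sum_norm_sq {u : α → Fin d → ℂ} (hu : MemLp u 2 μ) :
    Integrable (fun x => ∑ i, ‖u x i‖ ^ 2) μ :=
  integrable_finset_sum _ fun i _ => ((memLp_comp hu i).norm.integrable_sq)

lemma QF_aesm {a : α → Fin d → Fin d → ℂ} (ha : Measurable a)
    {u v : α → Fin d → ℂ} (hu : AEStronglyMeasurable u μ) (hv : AEStronglyMeasurable v μ) :
    AEStronglyMeasurable (fun x => QF d (a x) (u x) (v x)) μ := by
  simp only [QF_eq_double]
  refine Finset.aestronglyMeasurable_fun_sum _ fun i _ =>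
    Finset.aestronglyMeasurable_fun_sum _ fun j _ => ?_
  have hui : AEStronglyMeasurable (fun x => (starRingEnd ℂ) (u x i)) μ := by
    simp only [starRingEnd_apply]
    exact continuous_star.comp_aestronglyMeasurable
      ((continuous_apply i).comp_aestronglyMeasurable hu)
  have haij : AEStronglyMeasurable (fun x => a x i j) μ :=
    ((measurable_pi_apply j).comp ((measurable_pi_apply i).comp ha)).aestronglyMeasurable
  exact hui.mul (haij.mul ((continuous_apply j).comp_aestronglyMeasurable hv))

lemma QF_integrable {M' : ℝ} {a : α → Fin d → Fin d → ℂ} (ha : Measurable a)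
    (habd : ∀ᵐ x ∂μ, ‖a x‖ ≤ M')
    {u v : α → Fin d → ℂ} (hu : MemLp u 2 μ) (hv : MemLp v 2 μ) :
    Integrable (fun x => QF d (a x) (u x) (v x)) μ := by
  have hdom : Integrable (fun x => M' * ((∑ i, ‖u x i‖) * (∑ j, ‖v x j‖))) μ := by
    refine Integrable.const_mul ?_ M'
    have : (fun x => (∑ i, ‖u x i‖) * (∑ j, ‖v x j‖)) =
        fun x => ∑ i, ∑ j, ‖u x i‖ * ‖v x j‖ := by
      funext x; rw [Finset.sum_mul_sum]
    rw [this]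
    exact integrable_finset_sum _ fun i _ => integrable_finset_sum _ fun j _ =>
      integrable_norm_mul_norm (memLp_comp hu i) (memLp_comp hv j)
  refine hdom.mono' (QF_aesm ha hu.1 hv.1) ?_
  filter_upwards [habd] with x hx
  refine (norm_QF_le d (a x) (u x) (v x)).trans ?_
  have h1 : (0:ℝ) ≤ (∑ i, ‖u x i‖) * (∑ j, ‖v x j‖) := by positivity
  exact mul_le_mul_of_nonneg_right hx h1

lemma QF_integral_bound {M' : ℝ} (hM' : 0 ≤ M') {a : α → Fin d → Fin d → ℂ}
    (ha : Measurable a) (habd : ∀ᵐ x ∂μ, ‖a x‖ ≤ M')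
    {u v : α → Fin d → ℂ} (hu : MemLp u 2 μ) (hv : MemLp v 2 μ) :
    ‖∫ x, QF d (a x) (u x) (v x) ∂μ‖ ≤
      M' * ∑ i, ∑ j, (eLpNorm (fun x => u x i) 2 μ).toReal *
        (eLpNorm (fun x => v x j) 2 μ).toReal := by
  have hint := QF_integrable ha habd hu hv
  calc ‖∫ x, QF d (a x) (u x) (v x) ∂μ‖ ≤ ∫ x, ‖QF d (a x) (u x) (v x)‖ ∂μ :=
        norm_integral_le_integral_norm _
    _ ≤ ∫ x, M' * ∑ i, ∑ j, ‖u x i‖ * ‖v x j‖ ∂μ := by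
        refine integral_mono_ae hint.norm (Integrable.const_mul (integrable_finset_sum _
          fun i _ => integrable_finset_sum _ fun j _ =>
          integrable_norm_mul_norm (memLp_comp hu i) (memLp_comp hv j)) M') ?_
        filter_upwards [habd] with x hx
        refine (norm_QF_le d (a x) (u x) (v x)).trans ?_
        rw [← Finset.sum_mul_sum]
        exact mul_le_mul_of_nonneg_right hx (by positivity)
    _ = M' * ∑ i, ∑ j, ∫ x, ‖u x i‖ * ‖v x j‖ ∂μ := by
        rw [integral_const_mul]
        congr 1
        rw [integral_finset_sum _ fun i _ => integrable_finset_sum _ fun j _ =>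
          integrable_norm_mul_norm (memLp_comp hu i) (memLp_comp hv j)]
        exact Finset.sum_congr rfl fun i _ => integral_finset_sum _ fun j _ =>
          integrable_norm_mul_norm (memLp_comp hu i) (memLp_comp hv j)
    _ ≤ M' * ∑ i, ∑ j, (eLpNorm (fun x => u x i) 2 μ).toReal *
        (eLpNorm (fun x => v x j) 2 μ).toReal := by
        refine mul_le_mul_of_nonneg_left ?_ hM'
        exact Finset.sum_le_sum fun i _ => Finset.sum_le_sum fun j _ =>
          integral_norm_mul_norm_le (memLp_comp hu i) (memLp_comp hv j)

lemma le_sq_div_add {a ε : ℝ} (hε : 0 < ε) : a ≤ a^2/(2*ε) + ε/2 := by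
  have h2ε : (0:ℝ) < 2*ε := by linarith
  have h : a * (2*ε) ≤ a^2 + ε^2 := by nlinarith [sq_nonneg (a - ε)]
  refine ((le_div_iff₀ h2ε).2 h).trans (le_of_eq ?_)
  field_simp

lemma sq_div_twoeps {ε : ℝ} (hε : ε ≠ 0) : ε^2/(2*ε) = ε/2 := by
  field_simp

lemma integral_norm_le_of_lintegral_sq_le {α : Type*} [MeasurableSpace α] {μ : Measure α}
    [IsFiniteMeasure μ] {F : Type*} [NormedAddCommGroup F] {D : α → F}
    (hDm : AEStronglyMeasurable D μ) {M2 : ℝ} (hDbd : ∀ᵐ x ∂μ, ‖D x‖ ≤ M2)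
    {ε : ℝ} (hε : 0 < ε)
    (hsq : ∫⁻ x, (‖D x‖₊ : ℝ≥0∞)^2 ∂μ ≤ ENNReal.ofReal (ε^2)) :
    ∫ x, ‖D x‖ ∂μ ≤ ε/2 * (1 + (μ Set.univ).toReal) := by
  have hDL1 : Integrable (fun x => ‖D x‖) μ :=
    Integrable.mono' (integrable_const M2) hDm.norm
      (hDbd.mono fun x hx => by simpa using hx)
  have hsqm : AEStronglyMeasurable (fun x => ‖D x‖^2) μ :=
    (hDm.norm.aemeasurable.pow_const 2).aestronglyMeasurable
  have hDsqL1 : Integrable (fun x => ‖D x‖^2) μ := by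
    refine Integrable.mono' (integrable_const (M2^2)) hsqm ?_
    filter_upwards [hDbd] with x hx
    have h1 : ‖D x‖^2 ≤ M2^2 := by nlinarith [norm_nonneg (D x)]
    simpa [abs_of_nonneg (sq_nonneg ‖D x‖)] using h1
  have hDsq_le : ∫ x, ‖D x‖^2 ∂μ ≤ ε^2 := by
    have h1 : ∫ x, ‖D x‖^2 ∂μ = (∫⁻ x, ENNReal.ofReal (‖D x‖^2) ∂μ).toReal :=
      integral_eq_lintegral_of_nonneg_ae (Filter.Eventually.of_forall fun x => sq_nonneg _) hsqm
    have h2 : (∫⁻ x, ENNReal.ofReal (‖D x‖^2) ∂μ) = ∫⁻ x, (‖D x‖₊ : ℝ≥0∞) ^ 2 ∂μ := by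
      refine lintegral_congr fun x => ?_
      rw [ENNReal.ofReal_pow (norm_nonneg _), ← coe_nnnorm, ENNReal.ofReal_coe_nnreal]
    rw [h1, h2]
    calc (∫⁻ x, (‖D x‖₊ : ℝ≥0∞) ^ 2 ∂μ).toReal ≤ (ENNReal.ofReal (ε^2)).toReal :=
          ENNReal.toReal_mono ENNReal.ofReal_ne_top hsq
      _ = ε^2 := ENNReal.toReal_ofReal (sq_nonneg ε)
  calc ∫ x, ‖D x‖ ∂μ ≤ ∫ x, (‖D x‖^2/(2*ε) + ε/2) ∂μ :=
        integral_mono hDL1 ((hDsqL1.div_const _).add (integrable_const _))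
          (fun x => le_sq_div_add hε)
    _ = (∫ x, ‖D x‖^2 ∂μ)/(2*ε) + ε/2 * (μ Set.univ).toReal := by
        rw [integral_add (hDsqL1.div_const _) (integrable_const _), integral_div,
          integral_const, smul_eq_mul, measureReal_def]
        ring
    _ ≤ ε^2/(2*ε) + ε/2 * (μ Set.univ).toReal := by
        have h2ε : (0:ℝ) < 2*ε := by linarith
        exact add_le_add_left ((div_le_div_iff_of_pos_right h2ε).2 hDsq_le) _
    _ = ε/2 * (1 + (μ Set.univ).toReal) := by rw [sq_div_twoeps hε.ne']; ring

lemma norm_integral_QF_le {α : Type*} [MeasurableSpace α] {μ : Measure α} {d : ℕ}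
    {D : α → Fin d → Fin d → ℂ} {g : α → Fin d → ℂ} {Q : Set α} (hQ : MeasurableSet Q)
    (hgz : ∀ x ∉ Q, g x = 0) {Cg : ℝ} (hCg : ∀ x, ∑ i, ‖g x i‖^2 ≤ Cg)
    (hint : Integrable (fun x => QF d (D x) (g x) (g x)) μ)
    (hDL1 : IntegrableOn (fun x => ‖D x‖) Q μ) :
    ‖∫ x, QF d (D x) (g x) (g x) ∂μ‖ ≤ (d*Cg) * ∫ x in Q, ‖D x‖ ∂μ := by
  calc ‖∫ x, QF d (D x) (g x) (g x) ∂μ‖ ≤ ∫ x, ‖QF d (D x) (g x) (g x)‖ ∂μ :=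
        norm_integral_le_integral_norm _
    _ = ∫ x in Q, ‖QF d (D x) (g x) (g x)‖ ∂μ :=
        (setIntegral_eq_integral_of_forall_compl_eq_zero fun x hx => by
          simp [QF, hgz x hx]).symm
    _ ≤ ∫ x in Q, (d*Cg) * ‖D x‖ ∂μ := by
        refine setIntegral_mono_on hint.norm.integrableOn (hDL1.const_mul _) hQ fun x hx => ?_
        calc ‖QF d (D x) (g x) (g x)‖
            ≤ ‖D x‖ * ((∑ i, ‖g x i‖) * (∑ j, ‖g x j‖)) := norm_QF_le _ _ _ _
          _ ≤ ‖D x‖ * ((d:ℝ) * ∑ i, ‖g x i‖^2) :=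
              mul_le_mul_of_nonneg_left (sum_norm_sq_bound d (g x)) (norm_nonneg _)
          _ ≤ ‖D x‖ * ((d:ℝ) * Cg) := by
              refine mul_le_mul_of_nonneg_left ?_ (norm_nonneg _)
              exact mul_le_mul_of_nonneg_left (hCg x) (Nat.cast_nonneg d)
          _ = (d*Cg) * ‖D x‖ := by ring
    _ = (d*Cg) * ∫ x in Q, ‖D x‖ ∂μ := integral_const_mul _ _

lemma integral_sq_diff_le {α : Type*} [MeasurableSpace α] {μ : Measure α} {u v : α → ℂ}
    (hu : MemLp u 2 μ) (hv : MemLp v 2 μ) :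
    ∫ x, ‖u x‖^2 ∂μ ≤ ∫ x, ‖v x‖^2 ∂μ +
      (eLpNorm (fun x => u x - v x) 2 μ).toReal *
        ((eLpNorm u 2 μ).toReal + (eLpNorm v 2 μ).toReal) := by
  have hw : MemLp (fun x => u x - v x) 2 μ := hu.sub hv
  have h1 : ∫ x, (‖u x‖^2 - ‖v x‖^2) ∂μ ≤
      ∫ x, (‖u x - v x‖ * ‖u x‖ + ‖u x - v x‖ * ‖v x‖) ∂μ := by
    refine integral_mono (hu.norm.integrable_sq.sub hv.norm.integrable_sq)
      ((integrable_norm_mul_norm hw hu).add (integrable_norm_mul_norm hw hv)) fun x => ?_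
    have h2 := abs_le.1 (abs_norm_sub_norm_le (u x) (v x))
    nlinarith [norm_nonneg (u x), norm_nonneg (v x), h2.1, h2.2]
  rw [integral_sub hu.norm.integrable_sq hv.norm.integrable_sq,
    integral_add (integrable_norm_mul_norm hw hu) (integrable_norm_mul_norm hw hv)] at h1
  have h4 := integral_norm_mul_norm_le hw hu
  have h5 := integral_norm_mul_norm_le hw hv
  nlinarith [h4, h5]

end Aux

/-- Accretivity bound for the Carleson trace: if `Re ∫⟨A(t,·)f,f⟩ ≥ κ‖f‖₂²` for a.e.
`t > 0` and all `f` in a subspace `H` of `L²(ℝⁿ;ℂ^d)` in which smooth compactly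
supported elements of `H` are dense, and `A₀` is `t`-independent with finite Carleson
discrepancy `‖A − A₀‖_c < ∞`, then `Re ∫⟨A₀f,f⟩ ≥ κ‖f‖₂²` for all `f ∈ H`. -/
theorem stmt_17 (n d : ℕ) (κ : ℝ) (hκ : 0 < κ)
    (A : ℝ → EuclideanSpace ℝ (Fin n) → Fin d → Fin d → ℂ)
    (hA : Measurable (Function.uncurry A)) (M : ℝ) (hbd : ∀ t x, ‖A t x‖ ≤ M)
    (A₀ : EuclideanSpace ℝ (Fin n) → Fin d → Fin d → ℂ) (hA₀ : Measurable A₀)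
    (H : Set (EuclideanSpace ℝ (Fin n) → Fin d → ℂ))
    (hHL2 : ∀ f ∈ H, MemLp f 2 (volume : Measure (EuclideanSpace ℝ (Fin n))))
    (hdense : ∀ f ∈ H, ∀ ε : ℝ, 0 < ε → ∃ g ∈ H, ContDiff ℝ (⊤ : ℕ∞) g ∧
      HasCompactSupport g ∧ eLpNorm (f - g) 2 volume ≤ ENNReal.ofReal ε)
    (hacc : ∀ᵐ t ∂(volume.restrict (Ioi (0:ℝ))), ∀ f ∈ H,
      κ * (∫ x, ∑ i, ‖f x i‖ ^ 2) ≤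
        (∫ x, ∑ i, (starRingEnd ℂ) (f x i) * ∑ j, A t x i j * f x j).re)
    (hcar : stdCarlesonSq n d (fun t x => A t x - A₀ x) ≠ ⊤) :
    ∀ f ∈ H, κ * (∫ x, ∑ i, ‖f x i‖ ^ 2) ≤
      (∫ x, ∑ i, (starRingEnd ℂ) (f x i) * ∑ j, A₀ x i j * f x j).re := by
  classical
  have hM0 : 0 ≤ M := le_trans (norm_nonneg (A 0 0)) (hbd 0 0)
  have hAt : ∀ t, Measurable (A t) := fun t => hA.comp measurable_prodMk_left
  have hDm : ∀ t, Measurable (fun x => A t x - A₀ x) := fun t => (hAt t).sub hA₀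
  -- Step 1: from the finite Carleson norm, small-discrepancy times exist in quantity
  have key : ∀ (z : EuclideanSpace ℝ (Fin n)) (ℓ δ : ℝ), 0 < δ → δ ≤ ℓ →
      ∀ ε : ℝ≥0∞, 0 < ε →
      volume {t | t ∈ Ioo (0:ℝ) δ ∧
        (∫⁻ x in cube n z ℓ, (‖A t x - A₀ x‖₊ : ℝ≥0∞) ^ 2) < ε} ≠ 0 := by
    intro z ℓ δ hδ hδℓ ε hε h0
    have hmeasinv : Measurable fun t : ℝ => (ENNReal.ofReal t)⁻¹ :=
      ENNReal.measurable_ofReal.inv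
    have hae : ∀ᵐ t ∂(volume.restrict (Ioo (0:ℝ) δ)),
        ε ≤ ∫⁻ x in cube n z ℓ, (‖A t x - A₀ x‖₊ : ℝ≥0∞) ^ 2 := by
      have h1 := ae_restrict_of_ae (μ := volume) (s := Ioo (0:ℝ) δ)
        (measure_eq_zero_iff_ae_notMem.1 h0)
      filter_upwards [h1, ae_restrict_mem measurableSet_Ioo] with t ht htI
      by_contra hlt
      exact ht ⟨htI, not_le.1 hlt⟩
    have hbig : ∫⁻ t in Ioo (0:ℝ) ℓ,
        (∫⁻ x in cube n z ℓ, (‖A t x - A₀ x‖₊ : ℝ≥0∞) ^ 2) * (ENNReal.ofReal t)⁻¹ = ⊤ := by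
      rw [eq_top_iff]
      calc (⊤:ℝ≥0∞) = ε * ∫⁻ t in Ioo (0:ℝ) δ, (ENNReal.ofReal t)⁻¹ := by
            rw [lintegral_inv_Ioo_top hδ, ENNReal.mul_top hε.ne']
        _ = ∫⁻ t in Ioo (0:ℝ) δ, ε * (ENNReal.ofReal t)⁻¹ :=
            (lintegral_const_mul ε hmeasinv).symm
        _ ≤ ∫⁻ t in Ioo (0:ℝ) δ,
            (∫⁻ x in cube n z ℓ, (‖A t x - A₀ x‖₊ : ℝ≥0∞) ^ 2) * (ENNReal.ofReal t)⁻¹ :=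
            lintegral_mono_ae (hae.mono fun t ht => mul_le_mul_left ht _)
        _ ≤ ∫⁻ t in Ioo (0:ℝ) ℓ,
            (∫⁻ x in cube n z ℓ, (‖A t x - A₀ x‖₊ : ℝ≥0∞) ^ 2) * (ENNReal.ofReal t)⁻¹ :=
            lintegral_mono_set (Ioo_subset_Ioo le_rfl hδℓ)
    apply hcar
    rw [eq_top_iff, stdCarlesonSq]
    refine le_trans ?_ (le_iSup_of_le z (le_iSup_of_le ℓ
      (le_iSup_of_le (hδ.trans_le hδℓ) le_rfl)))
    rw [hbig, ENNReal.mul_top (ENNReal.inv_ne_zero.mpr ENNReal.ofReal_ne_top)]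
  -- Step 2: `A₀` is a.e. bounded by `M`
  have hA₀bd : ∀ᵐ x ∂(volume : Measure (EuclideanSpace ℝ (Fin n))), ‖A₀ x‖ ≤ M := by
    have hj : ∀ j k : ℕ, volume {x | x ∈ cube n (WithLp.toLp 2 fun _ => -(j:ℝ)) (2*j+1) ∧
        M + 1/((k:ℝ)+1) ≤ ‖A₀ x‖} = 0 := by
      intro j k
      set η : ℝ := 1/((k:ℝ)+1) with hηdef
      have hηpos : 0 < η := by positivity
      set S := {x | x ∈ cube n (WithLp.toLp 2 fun _ => -(j:ℝ)) (2*j+1) ∧ M + η ≤ ‖A₀ x‖} with hSdef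
      have hmain : ∀ c : ℝ, 0 < c → volume S ≤ ENNReal.ofReal c := by
        intro c hc
        have hℓ1 : (1:ℝ) ≤ 2*(j:ℝ)+1 := by
          have : (0:ℝ) ≤ (j:ℝ) := Nat.cast_nonneg j
          linarith
        have hεpos : (0:ℝ≥0∞) < ENNReal.ofReal (η^2*c) :=
          ENNReal.ofReal_pos.2 (by positivity)
        obtain ⟨t, htI, hts⟩ := nonempty_of_measure_ne_zero
          (key (WithLp.toLp 2 fun _ => -(j:ℝ)) (2*j+1) 1 one_pos hℓ1 _ hεpos)
        have hchain : ENNReal.ofReal (η^2) * volume S ≤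
            ENNReal.ofReal (η^2) * ENNReal.ofReal c := by
          calc ENNReal.ofReal (η^2) * volume S
              = ∫⁻ _ in S, ENNReal.ofReal (η^2) := (setLIntegral_const _ _).symm
            _ ≤ ∫⁻ x in S, (‖A t x - A₀ x‖₊ : ℝ≥0∞) ^ 2 := by
                refine setLIntegral_mono
                  ((((hDm t).nnnorm).coe_nnreal_ennreal).pow_const 2) fun x hx => ?_
                have h2 : η ≤ ‖A t x - A₀ x‖ := by
                  have h3 := norm_sub_norm_le (A₀ x) (A t x)
                  have h4 := hbd t x
                  rw [norm_sub_rev] at h3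
                  have h5 := hx.2
                  linarith
                calc ENNReal.ofReal (η^2) = (ENNReal.ofReal η)^2 := by
                      rw [← ENNReal.ofReal_pow hηpos.le]
                  _ ≤ (ENNReal.ofReal ‖A t x - A₀ x‖)^2 :=
                      pow_le_pow_left' (ENNReal.ofReal_le_ofReal h2) 2
                  _ = (‖A t x - A₀ x‖₊ : ℝ≥0∞) ^ 2 := by rw [← coe_nnnorm, ENNReal.ofReal_coe_nnreal]
            _ ≤ ∫⁻ x in cube n (WithLp.toLp 2 fun _ => -(j:ℝ)) (2*j+1), (‖A t x - A₀ x‖₊ : ℝ≥0∞) ^ 2 :=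
                lintegral_mono_set fun x hx => hx.1
            _ ≤ ENNReal.ofReal (η^2*c) := hts.le
            _ = ENNReal.ofReal (η^2) * ENNReal.ofReal c := ENNReal.ofReal_mul (sq_nonneg η)
        exact (ENNReal.mul_le_mul_iff_right (ENNReal.ofReal_pos.2 (by positivity)).ne'
          ENNReal.ofReal_ne_top).1 hchain
      refine le_antisymm (ENNReal.le_of_forall_pos_le_add fun c hc _ => ?_) zero_le
      rw [zero_add]
      simpa [ENNReal.ofReal_coe_nnreal] using hmain (c:ℝ) hc
    rw [ae_iff]
    refine measure_mono_null ?_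
      (measure_iUnion_null fun j => measure_iUnion_null fun k => hj j k)
    intro x hx
    simp only [mem_setOf_eq, not_le] at hx
    obtain ⟨j, hjx⟩ := mem_cube_nat x
    obtain ⟨k, hk⟩ := exists_nat_one_div_lt (sub_pos.2 hx)
    exact mem_iUnion.2 ⟨j, mem_iUnion.2 ⟨k, ⟨hjx, by linarith⟩⟩⟩
  -- Step 3: the conclusion for continuous compactly supported elements of `H`
  have hsmooth : ∀ g ∈ H, Continuous g → HasCompactSupport g →
      κ * (∫ x, ∑ i, ‖g x i‖ ^ 2) ≤ (∫ x, QF d (A₀ x) (g x) (g x)).re := by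
    intro g hgH hgc hgsupp
    have hg2 := hHL2 g hgH
    obtain ⟨r, hrsupp⟩ := hgsupp.isBounded.subset_closedBall 0
    obtain ⟨R, hRr⟩ := exists_nat_ge r
    have hℓ : (0:ℝ) < 2*(R:ℝ)+1 := by positivity
    set Qc := cube n (WithLp.toLp 2 fun _ => -(R:ℝ)) (2*(R:ℝ)+1) with hQcdef
    have hgz : ∀ x, x ∉ Qc → g x = 0 := by
      intro x hx
      by_contra hgx
      apply hx
      have hxts : x ∈ tsupport g := subset_tsupport g hgx
      have hxb : ‖x‖ ≤ r := by
        have := hrsupp hxts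
        simpa [Metric.mem_closedBall, dist_zero_right] using this
      intro i
      have h3 : |x i| ≤ (R:ℝ) := (abs_coord_le_norm x i).trans (hxb.trans hRr)
      have h4 := abs_le.1 h3
      constructor
      · simpa using h4.1
      · simp only [PiLp.toLp_apply]
        linarith [h4.2]
    -- bound for the quadratic weight
    have hNgc : Continuous (fun x : EuclideanSpace ℝ (Fin n) => ∑ i, ‖g x i‖ ^ 2) := by
      refine continuous_finset_sum _ fun i _ => ?_
      exact (((continuous_apply i).comp hgc).norm).pow 2
    have hNgsupp : HasCompactSupport (fun x : EuclideanSpace ℝ (Fin n) => ∑ i, ‖g x i‖ ^ 2) := by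
      have := hgsupp.comp_left (g := fun v : Fin d → ℂ => ∑ i, ‖v i‖ ^ 2) (by simp)
      exact this
    obtain ⟨x₀, hx₀⟩ := hNgc.exists_forall_ge_of_hasCompactSupport hNgsupp
    set Cg : ℝ := ∑ i, ‖g x₀ i‖ ^ 2 with hCgdef
    have hCg0 : 0 ≤ Cg := by positivity
    -- the good set of times from the accretivity hypothesis
    set T := {t : ℝ | ∀ f ∈ H, κ * (∫ x, ∑ i, ‖f x i‖ ^ 2) ≤
      (∫ x, ∑ i, (starRingEnd ℂ) (f x i) * ∑ j, A t x i j * f x j).re} with hTdef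
    have hTc : volume ({t | t ∉ T} ∩ Ioi (0:ℝ)) = 0 := by
      have h1 : (volume.restrict (Ioi (0:ℝ))) {t | t ∉ T} = 0 := hacc
      rwa [Measure.restrict_apply' measurableSet_Ioi] at h1
    set V : ℝ := (volume Qc).toReal with hVdef
    have hV0 : 0 ≤ V := ENNReal.toReal_nonneg
    refine le_of_forall_pos_le_add fun η hη => ?_
    set K : ℝ := (d*Cg) * ((1+V)/2) with hKdef
    have hK0 : 0 ≤ K := by positivity
    set ε : ℝ := η / (K+1) with hεdef
    have hεpos : 0 < ε := by positivity
    have hKε : K * ε ≤ η := by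
      rw [hεdef, mul_comm, div_mul_eq_mul_div, div_le_iff₀ (by linarith : (0:ℝ) < K+1)]
      nlinarith
    -- choose a good time t
    set S := {t | t ∈ Ioo (0:ℝ) (2*(R:ℝ)+1) ∧
      (∫⁻ x in Qc, (‖A t x - A₀ x‖₊ : ℝ≥0∞) ^ 2) < ENNReal.ofReal (ε^2)} with hSdef
    have hne : volume S ≠ 0 :=
      key (WithLp.toLp 2 fun _ => -(R:ℝ)) (2*(R:ℝ)+1) (2*(R:ℝ)+1) hℓ le_rfl _
        (ENNReal.ofReal_pos.2 (by positivity))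
    have hSdiff : volume (S \ T) = 0 := by
      refine measure_mono_null ?_ hTc
      rintro t ⟨⟨hI, _⟩, htT⟩
      exact ⟨htT, hI.1⟩
    have hSTne : volume (S ∩ T) ≠ 0 := by
      intro h0
      apply hne
      refine le_antisymm ?_ zero_le
      calc volume S ≤ volume ((S ∩ T) ∪ (S \ T)) := measure_mono (by
            intro t ht
            by_cases htT : t ∈ T
            · exact Or.inl ⟨ht, htT⟩
            · exact Or.inr ⟨ht, htT⟩)
        _ ≤ volume (S ∩ T) + volume (S \ T) := measure_union_le _ _
        _ = 0 := by rw [h0, hSdiff, add_zero]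
    obtain ⟨t, htS, htT⟩ := nonempty_of_measure_ne_zero hSTne
    -- integrability
    have hDbd : ∀ᵐ x ∂(volume : Measure (EuclideanSpace ℝ (Fin n))),
        ‖A t x - A₀ x‖ ≤ 2*M :=
      hA₀bd.mono fun x hx => (norm_sub_le _ _).trans (by linarith [hbd t x])
    have intQ0 : Integrable (fun x => QF d (A₀ x) (g x) (g x)) volume :=
      QF_integrable hA₀ hA₀bd hg2 hg2
    have intQD : Integrable (fun x => QF d (A t x - A₀ x) (g x) (g x)) volume :=
      QF_integrable (hDm t) hDbd hg2 hg2
    have hsplit : (∫ x, QF d (A t x) (g x) (g x)) =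
        (∫ x, QF d (A₀ x) (g x) (g x)) + ∫ x, QF d (A t x - A₀ x) (g x) (g x) := by
      rw [← integral_add intQ0 intQD]
      refine integral_congr_ae (Filter.Eventually.of_forall fun x => ?_)
      show QF d (A t x) (g x) (g x) =
        QF d (A₀ x) (g x) (g x) + QF d (A t x - A₀ x) (g x) (g x)
      rw [← QF_add_left]
      congr 1
      funext i j
      simp
    have hacc_g : κ * (∫ x, ∑ i, ‖g x i‖ ^ 2) ≤ (∫ x, QF d (A t x) (g x) (g x)).re :=
      htT g hgH
    -- the error estimate
    haveI hfin : IsFiniteMeasure (volume.restrict Qc) :=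
      ⟨by rw [Measure.restrict_apply_univ]; exact cube_volume_lt_top _ _⟩
    have hDaesm : AEStronglyMeasurable (fun x => A t x - A₀ x)
        (volume : Measure (EuclideanSpace ℝ (Fin n))) := (hDm t).aestronglyMeasurable
    have hDL1 : IntegrableOn (fun x => ‖A t x - A₀ x‖) Qc volume := by
      refine Integrable.mono' (integrable_const (2*M)) hDaesm.norm.restrict ?_
      filter_upwards [ae_restrict_of_ae hDbd] with x hx
      simpa using hx
    have hDint_le : ∫ x in Qc, ‖A t x - A₀ x‖ ≤ ε/2 * (1 + V) := by
      have h1 := integral_norm_le_of_lintegral_sq_le (μ := volume.restrict Qc)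
        hDaesm.restrict (ae_restrict_of_ae hDbd) hεpos htS.2.le
      rwa [Measure.restrict_apply_univ] at h1
    have hQDre : ‖∫ x, QF d (A t x - A₀ x) (g x) (g x)‖ ≤ (d * Cg) * (ε/2 * (1 + V)) := by
      refine (norm_integral_QF_le (cube_measurable _ _) hgz hx₀ intQD hDL1).trans ?_
      exact mul_le_mul_of_nonneg_left hDint_le (by positivity)
    calc κ * (∫ x, ∑ i, ‖g x i‖ ^ 2) ≤ (∫ x, QF d (A t x) (g x) (g x)).re := hacc_g
      _ = (∫ x, QF d (A₀ x) (g x) (g x)).re +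
          (∫ x, QF d (A t x - A₀ x) (g x) (g x)).re := by rw [hsplit, Complex.add_re]
      _ ≤ (∫ x, QF d (A₀ x) (g x) (g x)).re +
          ‖∫ x, QF d (A t x - A₀ x) (g x) (g x)‖ := by
          refine add_le_add_right ?_ _
          exact Complex.re_le_norm _
      _ ≤ (∫ x, QF d (A₀ x) (g x) (g x)).re + (d * Cg) * (ε/2 * (1 + V)) :=
          add_le_add_right hQDre _
      _ = (∫ x, QF d (A₀ x) (g x) (g x)).re + K * ε := by rw [hKdef]; ring
      _ ≤ (∫ x, QF d (A₀ x) (g x) (g x)).re + η := add_le_add_right hKε _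
  -- Step 4: density
  intro f hfH
  have hf2 := hHL2 f hfH
  show κ * (∫ x, ∑ i, ‖f x i‖ ^ 2) ≤ (∫ x, QF d (A₀ x) (f x) (f x)).re
  set Sf : ℝ := (eLpNorm f 2 volume).toReal with hSfdef
  set B : ℝ := Sf + 1 with hBdef
  have hSf0 : 0 ≤ Sf := ENNReal.toReal_nonneg
  have hB0 : 0 ≤ B := by positivity
  refine le_of_forall_pos_le_add fun η hη => ?_
  set C : ℝ := 2*κ*d*B + 2*M*d^2*B with hCdef
  have hC0 : 0 ≤ C := by positivity
  set ε : ℝ := min 1 (η / (C+1)) with hεdef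
  have hεpos : 0 < ε := lt_min one_pos (by positivity)
  have hε1 : ε ≤ 1 := min_le_left _ _
  have hCε : C * ε ≤ η := by
    calc C * ε ≤ C * (η/(C+1)) := mul_le_mul_of_nonneg_left (min_le_right _ _) hC0
      _ ≤ η := by
          rw [mul_comm, div_mul_eq_mul_div, div_le_iff₀ (by linarith : (0:ℝ) < C+1)]
          nlinarith
  obtain ⟨g, hgH, hgsm, hgcs, hfg⟩ := hdense f hfH ε hεpos
  have hg2 := hHL2 g hgH
  have hu2 : MemLp (f - g) 2 volume := hf2.sub hg2
  have hui : ∀ i, (eLpNorm (fun x => f x i - g x i) 2 volume).toReal ≤ ε := by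
    intro i
    refine ENNReal.toReal_le_of_le_ofReal hεpos.le (le_trans ?_ hfg)
    exact eLpNorm_mono fun x => norm_le_pi_norm ((f - g) x) i
  have hfi : ∀ i, (eLpNorm (fun x => f x i) 2 volume).toReal ≤ B := by
    intro i
    refine le_trans (ENNReal.toReal_mono hf2.2.ne
      (eLpNorm_mono fun x => norm_le_pi_norm (f x) i)) ?_
    rw [hBdef]; linarith
  have hgB : (eLpNorm g 2 volume).toReal ≤ B := by
    have h1 : eLpNorm g 2 volume ≤ eLpNorm f 2 volume + ENNReal.ofReal 1 := by
      have h2 : f - (f - g) = g := sub_sub_cancel f g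
      rw [← h2]
      refine (eLpNorm_sub_le hf2.1 hu2.1 one_le_two).trans ?_
      exact add_le_add_right (hfg.trans (ENNReal.ofReal_le_ofReal hε1)) _
    refine le_trans (ENNReal.toReal_mono ?_ h1) ?_
    · exact (ENNReal.add_ne_top).2 ⟨hf2.2.ne, ENNReal.ofReal_ne_top⟩
    · rw [ENNReal.toReal_add hf2.2.ne ENNReal.ofReal_ne_top, ENNReal.toReal_ofReal zero_le_one]
  have hgi : ∀ i, (eLpNorm (fun x => g x i) 2 volume).toReal ≤ B := fun i =>
    le_trans (ENNReal.toReal_mono hg2.2.ne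
      (eLpNorm_mono fun x => norm_le_pi_norm (g x) i)) hgB
  -- (a) comparison of the L² masses
  have hIfg : (∫ x, ∑ i, ‖f x i‖ ^ 2) ≤ (∫ x, ∑ i, ‖g x i‖ ^ 2) + (d:ℝ) * (2*B*ε) := by
    rw [integral_finset_sum _ fun i _ => ((memLp_comp hf2 i).norm.integrable_sq),
      integral_finset_sum _ fun i _ => ((memLp_comp hg2 i).norm.integrable_sq)]
    have hcard : (d:ℝ) * (2*B*ε) = ∑ _i : Fin d, 2*B*ε := by
      rw [Finset.sum_const, Finset.card_univ, Fintype.card_fin, nsmul_eq_mul]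
    rw [hcard, ← Finset.sum_add_distrib]
    refine Finset.sum_le_sum fun i _ => ?_
    have h1 := integral_sq_diff_le (memLp_comp hf2 i) (memLp_comp hg2 i)
    have h2 : (eLpNorm (fun x => f x i - g x i) 2 volume).toReal *
        ((eLpNorm (fun x => f x i) 2 volume).toReal +
          (eLpNorm (fun x => g x i) 2 volume).toReal) ≤ ε * (B + B) := by
      refine mul_le_mul (hui i) (add_le_add (hfi i) (hgi i)) ?_ hεpos.le
      positivity
    calc ∫ x, ‖f x i‖ ^ 2 ≤ (∫ x, ‖g x i‖ ^ 2) +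
          (eLpNorm (fun x => f x i - g x i) 2 volume).toReal *
            ((eLpNorm (fun x => f x i) 2 volume).toReal +
              (eLpNorm (fun x => g x i) 2 volume).toReal) := h1
      _ ≤ (∫ x, ‖g x i‖ ^ 2) + ε * (B + B) := add_le_add_right h2 _
      _ = (∫ x, ‖g x i‖ ^ 2) + 2*B*ε := by ring
  -- (b) comparison of the quadratic forms
  have hQfg : (∫ x, QF d (A₀ x) (g x) (g x)).re ≤
      (∫ x, QF d (A₀ x) (f x) (f x)).re + 2*M*(d:ℝ)^2*B*ε := by
    have hsplit2 : (∫ x, QF d (A₀ x) (f x) (f x)) - (∫ x, QF d (A₀ x) (g x) (g x)) =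
        (∫ x, QF d (A₀ x) ((f - g) x) (f x)) + ∫ x, QF d (A₀ x) (g x) ((f - g) x) := by
      rw [← integral_sub (QF_integrable hA₀ hA₀bd hf2 hf2) (QF_integrable hA₀ hA₀bd hg2 hg2),
        ← integral_add (QF_integrable hA₀ hA₀bd hu2 hf2) (QF_integrable hA₀ hA₀bd hg2 hu2)]
      refine integral_congr_ae (Filter.Eventually.of_forall fun x => ?_)
      exact QF_split d (A₀ x) (f x) (g x)
    have hb1 : ‖∫ x, QF d (A₀ x) ((f - g) x) (f x)‖ ≤ M * ((d:ℝ)^2 * (ε * B)) := by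
      refine (QF_integral_bound hM0 hA₀ hA₀bd hu2 hf2).trans ?_
      refine mul_le_mul_of_nonneg_left ?_ hM0
      calc ∑ i, ∑ j, (eLpNorm (fun x => (f - g) x i) 2 volume).toReal *
            (eLpNorm (fun x => f x j) 2 volume).toReal
          ≤ ∑ _i : Fin d, ∑ _j : Fin d, ε * B := by
            refine Finset.sum_le_sum fun i _ => Finset.sum_le_sum fun j _ => ?_
            exact mul_le_mul (hui i) (hfi j) ENNReal.toReal_nonneg hεpos.le
        _ = (d:ℝ)^2 * (ε * B) := by
            simp [Finset.sum_const, Finset.card_univ]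
            ring
    have hb2 : ‖∫ x, QF d (A₀ x) (g x) ((f - g) x)‖ ≤ M * ((d:ℝ)^2 * (B * ε)) := by
      refine (QF_integral_bound hM0 hA₀ hA₀bd hg2 hu2).trans ?_
      refine mul_le_mul_of_nonneg_left ?_ hM0
      calc ∑ i, ∑ j, (eLpNorm (fun x => g x i) 2 volume).toReal *
            (eLpNorm (fun x => (f - g) x j) 2 volume).toReal
          ≤ ∑ _i : Fin d, ∑ _j : Fin d, B * ε := by
            refine Finset.sum_le_sum fun i _ => Finset.sum_le_sum fun j _ => ?_
            exact mul_le_mul (hgi i) (hui j) ENNReal.toReal_nonneg hB0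
        _ = (d:ℝ)^2 * (B * ε) := by
            simp [Finset.sum_const, Finset.card_univ]
            ring
    have hdiff : ‖(∫ x, QF d (A₀ x) (f x) (f x)) - (∫ x, QF d (A₀ x) (g x) (g x))‖ ≤
        2*M*(d:ℝ)^2*B*ε := by
      rw [hsplit2]
      refine (norm_add_le _ _).trans ?_
      calc ‖∫ x, QF d (A₀ x) ((f - g) x) (f x)‖ + ‖∫ x, QF d (A₀ x) (g x) ((f - g) x)‖
          ≤ M * ((d:ℝ)^2 * (ε * B)) + M * ((d:ℝ)^2 * (B * ε)) := add_le_add hb1 hb2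
        _ = 2*M*(d:ℝ)^2*B*ε := by ring
    have hre : |((∫ x, QF d (A₀ x) (f x) (f x)) -
        (∫ x, QF d (A₀ x) (g x) (g x))).re| ≤ 2*M*(d:ℝ)^2*B*ε :=
      le_trans (Complex.abs_re_le_norm _) hdiff
    rw [Complex.sub_re] at hre
    have := abs_le.1 hre
    linarith [this.1]
  -- conclusion
  calc κ * (∫ x, ∑ i, ‖f x i‖ ^ 2)
      ≤ κ * ((∫ x, ∑ i, ‖g x i‖ ^ 2) + (d:ℝ) * (2*B*ε)) :=
        mul_le_mul_of_nonneg_left hIfg hκ.le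
    _ = κ * (∫ x, ∑ i, ‖g x i‖ ^ 2) + 2*κ*(d:ℝ)*B*ε := by ring
    _ ≤ (∫ x, QF d (A₀ x) (g x) (g x)).re + 2*κ*(d:ℝ)*B*ε :=
        add_le_add_left (hsmooth g hgH hgsm.continuous hgcs) _
    _ ≤ ((∫ x, QF d (A₀ x) (f x) (f x)).re + 2*M*(d:ℝ)^2*B*ε) + 2*κ*(d:ℝ)*B*ε :=
        add_le_add_left hQfg _
    _ = (∫ x, QF d (A₀ x) (f x) (f x)).re + C*ε := by rw [hCdef]; ring
    _ ≤ (∫ x, QF d (A₀ x) (f x) (f x)).re + η := add_le_add_right hCε _
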